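/- arXiv:2407.09660 — 3 statements merged into one kernel-verified Lean document; each statement's English description precedes it below -/
import Mathlib

section
/- Let G be a continuous bilinear functional on W^{k+1,p}(D) × W^{ℓ+1,q}(D) for a bounded Lipschitz domain D ⊆ ℝ^n such that G(f, ·) = 0 for every polynomial f of degree ≤ k and G(·, g) = 0 for every polynomial g of degree ≤ ℓ. Then there exists a constant C depending only on D and the norm of G such that |G(f, g)| ≤ C |f|_{k+1,p,D} |g|_{ℓ+1,q,D} for all f ∈ W^{k+1,p}(D) and g ∈ W^{ℓ+1,q}(D), where |·|_{m,p,D} denotes the Sobolev seminorm of order m. -/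
open MeasureTheory

/-- The Sobolev seminorm `|f|_{k,p,D} = (∫_D ‖D^k f‖^p)^{1/p}`. -/
noncomputable def sobSeminorm {n : ℕ} (D : Set (EuclideanSpace ℝ (Fin n))) (k : ℕ)
    (p : ℝ) (f : EuclideanSpace ℝ (Fin n) → ℝ) : ℝ :=
  (∫ x in D, ‖iteratedFDeriv ℝ k f x‖ ^ p) ^ (1 / p)

/-- The Sobolev norm `‖f‖_{k,p,D} = (Σ_{m ≤ k} ∫_D ‖D^m f‖^p)^{1/p}`. -/
noncomputable def sobNorm {n : ℕ} (D : Set (EuclideanSpace ℝ (Fin n))) (k : ℕ)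
    (p : ℝ) (f : EuclideanSpace ℝ (Fin n) → ℝ) : ℝ :=
  (∑ m ∈ Finset.range (k + 1), ∫ x in D, ‖iteratedFDeriv ℝ m f x‖ ^ p) ^ (1 / p)

lemma contDiff_mvpoly_eval {n : ℕ} (P : MvPolynomial (Fin n) ℝ) :
    ContDiff ℝ (⊤ : ℕ∞) (fun x : EuclideanSpace ℝ (Fin n) => MvPolynomial.eval (fun i => x i) P) := by
  apply P.induction_on
  · intro a; simpa using contDiff_const
  · intro p q hp hq; simpa using hp.add hq
  · intro p i hp
    simp only [MvPolynomial.eval_mul, MvPolynomial.eval_X]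
    exact hp.mul (EuclideanSpace.proj (𝕜 := ℝ) i).contDiff

lemma sobNorm_nonneg {n : ℕ} (D : Set (EuclideanSpace ℝ (Fin n))) (k : ℕ) (p : ℝ)
    (f : EuclideanSpace ℝ (Fin n) → ℝ) : 0 ≤ sobNorm D k p f := by
  apply Real.rpow_nonneg
  exact Finset.sum_nonneg fun m _ => integral_nonneg fun x => by positivity

lemma sobSeminorm_nonneg {n : ℕ} (D : Set (EuclideanSpace ℝ (Fin n))) (k : ℕ) (p : ℝ)
    (f : EuclideanSpace ℝ (Fin n) → ℝ) : 0 ≤ sobSeminorm D k p f := by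
  apply Real.rpow_nonneg
  exact integral_nonneg fun x => by positivity

/-- Bramble–Hilbert lemma for bilinear forms: if `G` is a bounded bilinear functional on
`W^{k+1,p}(D) × W^{ℓ+1,q}(D)` on a bounded Lipschitz domain `D` (so that the
Deny–Lions lemma applies), vanishing whenever its first argument is a polynomial of
degree `≤ k` or its second argument is a polynomial of degree `≤ ℓ`, then
`|G(f,g)| ≤ C |f|_{k+1,p,D} |g|_{ℓ+1,q,D}`. -/
theorem bramble_hilbert_bilinear (n k ℓ : ℕ) (p q : ℝ) (hp : 1 ≤ p) (hq : 1 ≤ q)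
    (D : Set (EuclideanSpace ℝ (Fin n))) (hDopen : IsOpen D)
    (hDbdd : Bornology.IsBounded D) (hDconn : IsConnected D)
    -- the Deny–Lions / Bramble–Hilbert lemma for linear functionals is available on `D`:
    (hDL : ∀ (j : ℕ) (r : ℝ), 1 ≤ r → ∃ CDL : ℝ, ∀ f : EuclideanSpace ℝ (Fin n) → ℝ,
      ContDiff ℝ (⊤ : ℕ∞) f → ∃ P : MvPolynomial (Fin n) ℝ, P.totalDegree ≤ j ∧
        sobNorm D (j + 1) r (fun x => f x - MvPolynomial.eval (fun i => x i) P) ≤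
          CDL * sobSeminorm D (j + 1) r f)
    (G : (EuclideanSpace ℝ (Fin n) → ℝ) → (EuclideanSpace ℝ (Fin n) → ℝ) → ℝ)
    -- bilinearity of G
    (hGadd₁ : ∀ f₁ f₂ g, G (f₁ + f₂) g = G f₁ g + G f₂ g)
    (hGsmul₁ : ∀ (c : ℝ) f g, G (c • f) g = c * G f g)
    (hGadd₂ : ∀ f g₁ g₂, G f (g₁ + g₂) = G f g₁ + G f g₂)
    (hGsmul₂ : ∀ (c : ℝ) f g, G f (c • g) = c * G f g)
    -- continuity (boundedness) of G
    (M : ℝ)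
    (hGbdd : ∀ f g, ContDiff ℝ (⊤ : ℕ∞) f → ContDiff ℝ (⊤ : ℕ∞) g →
      |G f g| ≤ M * sobNorm D (k + 1) p f * sobNorm D (ℓ + 1) q g)
    -- G vanishes on polynomials of degree ≤ k in the first argument
    (hGpoly₁ : ∀ (P : MvPolynomial (Fin n) ℝ), P.totalDegree ≤ k →
      ∀ g, G (fun x => MvPolynomial.eval (fun i => x i) P) g = 0)
    -- and on polynomials of degree ≤ ℓ in the second argument
    (hGpoly₂ : ∀ (P : MvPolynomial (Fin n) ℝ), P.totalDegree ≤ ℓ →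
      ∀ f, G f (fun x => MvPolynomial.eval (fun i => x i) P) = 0) :
    ∃ C : ℝ, ∀ f g, ContDiff ℝ (⊤ : ℕ∞) f → ContDiff ℝ (⊤ : ℕ∞) g →
      |G f g| ≤ C * sobSeminorm D (k + 1) p f * sobSeminorm D (ℓ + 1) q g := by
  obtain ⟨C₁, hC₁⟩ := hDL k p hp
  obtain ⟨C₂, hC₂⟩ := hDL ℓ q hq
  refine ⟨|M| * |C₁| * |C₂|, fun f g hf hg => ?_⟩
  obtain ⟨P, hPdeg, hPbound⟩ := hC₁ f hf
  obtain ⟨Q, hQdeg, hQbound⟩ := hC₂ g hg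
  set Pf : EuclideanSpace ℝ (Fin n) → ℝ := fun x => MvPolynomial.eval (fun i => x i) P with hPf
  set Qf : EuclideanSpace ℝ (Fin n) → ℝ := fun x => MvPolynomial.eval (fun i => x i) Q with hQf
  set f' : EuclideanSpace ℝ (Fin n) → ℝ := fun x => f x - Pf x with hf'
  set g' : EuclideanSpace ℝ (Fin n) → ℝ := fun x => g x - Qf x with hg'
  have hf's : ContDiff ℝ (⊤ : ℕ∞) f' := hf.sub (contDiff_mvpoly_eval P)
  have hg's : ContDiff ℝ (⊤ : ℕ∞) g' := hg.sub (contDiff_mvpoly_eval Q)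
  have hfeq : f = f' + Pf := by funext x; simp [hf']
  have hgeq : g = g' + Qf := by funext x; simp [hg']
  have key : G f g = G f' g' := by
    rw [hfeq, hgeq, hGadd₁, hGadd₂, hGadd₂]
    rw [hGpoly₁ P hPdeg, hGpoly₂ Q hQdeg f', hGpoly₂ Q hQdeg Pf]
    ring
  have hN₁ : sobNorm D (k + 1) p f' ≤ |C₁| * sobSeminorm D (k + 1) p f :=
    hPbound.trans (mul_le_mul_of_nonneg_right (le_abs_self C₁) (sobSeminorm_nonneg _ _ _ _))
  have hN₂ : sobNorm D (ℓ + 1) q g' ≤ |C₂| * sobSeminorm D (ℓ + 1) q g :=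
    hQbound.trans (mul_le_mul_of_nonneg_right (le_abs_self C₂) (sobSeminorm_nonneg _ _ _ _))
  have h1 : |G f g| ≤ M * sobNorm D (k + 1) p f' * sobNorm D (ℓ + 1) q g' := by
    rw [key]; exact hGbdd f' g' hf's hg's
  have h2 : M * sobNorm D (k + 1) p f' * sobNorm D (ℓ + 1) q g' ≤
      |M| * sobNorm D (k + 1) p f' * sobNorm D (ℓ + 1) q g' := by
    have := mul_nonneg (sobNorm_nonneg D (k + 1) p f') (sobNorm_nonneg D (ℓ + 1) q g')
    nlinarith [le_abs_self M]
  have h3 : |M| * sobNorm D (k + 1) p f' * sobNorm D (ℓ + 1) q g' ≤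
      |M| * (|C₁| * sobSeminorm D (k + 1) p f) * (|C₂| * sobSeminorm D (ℓ + 1) q g) := by
    have hM : (0:ℝ) ≤ |M| := abs_nonneg M
    exact mul_le_mul (mul_le_mul_of_nonneg_left hN₁ hM) hN₂ (sobNorm_nonneg _ _ _ _)
      (mul_nonneg hM (mul_nonneg (abs_nonneg _) (sobSeminorm_nonneg _ _ _ _)))
  calc |G f g| ≤ _ := h1
    _ ≤ _ := h2
    _ ≤ _ := h3
    _ = |M| * |C₁| * |C₂| * sobSeminorm D (k + 1) p f * sobSeminorm D (ℓ + 1) q g := by ring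
end

section
/- (Abstract Aubin–Nitsche/duality L² estimate) Let V ⊆ H be Hilbert spaces, a : V × V → ℝ bilinear bounded, u ∈ V, u_h ∈ V_h ⊆ V. Suppose: (i) for every χ ∈ H there exists w_χ ∈ V solving the adjoint problem a(v, w_χ) = ⟨χ, v⟩_H for all v ∈ V, with regularity ‖w_χ‖_W ≤ C_R ‖χ‖_H in a subspace W ⊆ V; (ii) an interpolant I_h w_χ ∈ V_h satisfies ‖w_χ − I_h w_χ‖_V ≤ C_I h ‖w_χ‖_W; (iii) ‖u − u_h‖_V ≤ C₁ h; and (iv) the consistency bound |a(u_h, I_h w_χ) − F(I_h w_χ)| ≤ C₂ h² ‖w_χ‖_W, where F(v) := a(u, v). Then ‖u − u_h‖_H ≤ C h² for a constant C depending on C_R, C_I, C₁, C₂ and the boundedness constant of a. -/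
/-!
Duality argument. Let `e = u - u_h` and let `w` solve the adjoint problem with data `e`, so that
`‖e‖² = a(e, w)`. Subtracting the interpolant splits this as
`a(e, w - I_h w) + (a(u, I_h w) - a(u_h, I_h w))`: the first term is `O(h) · O(h) · nW(w)` by
boundedness of `a`, the second `O(h²) · nW(w)` by consistency. Regularity `nW(w) ≤ C_R ‖e‖`
turns this into `‖e‖² ≤ C h² ‖e‖`, and dividing by `‖e‖` gives the `h²` bound.
-/

open scoped RealInnerProductSpace

theorem le_of_sq_le_mul {x c : ℝ} (hc : 0 ≤ c) (hxc : x ^ 2 ≤ c * x) : x ≤ c := by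
  nlinarith

theorem le_mul_mul_of_abs_le_mul_mul {t Ca p q α β : ℝ} (ht : |t| ≤ Ca * p * q) (hCa : 0 ≤ Ca)
    (hp : 0 ≤ p) (hq : 0 ≤ q) (hpα : p ≤ α) (hqβ : q ≤ β) : t ≤ Ca * α * β :=
  (le_abs_self t).trans <| ht.trans <|
    mul_le_mul (mul_le_mul_of_nonneg_left hpα hCa) hqβ hq (mul_nonneg hCa (hp.trans hpα))

section Duality

variable {H : Type*} [NormedAddCommGroup H] [InnerProductSpace ℝ H]
  {V : Submodule ℝ H} {a : H →ₗ[ℝ] H →ₗ[ℝ] ℝ} {u uh w Iw : H}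

theorem sq_norm_sub_eq_of_adjoint (he : u - uh ∈ V) (hw : ∀ v ∈ V, a v w = ⟪u - uh, v⟫) :
    ‖u - uh‖ ^ 2 = a (u - uh) (w - Iw) + (a u Iw - a uh Iw) := by
  rw [← real_inner_self_eq_norm_sq, ← hw _ he]
  simp only [map_sub, LinearMap.sub_apply]
  ring

theorem sq_norm_sub_le_of_adjoint {nV nW : H → ℝ} {Ca CI C₁ C₂ h : ℝ} (hCa : 0 ≤ Ca)
    (hnV : ∀ x, 0 ≤ nV x) (habdd : ∀ x y, |a x y| ≤ Ca * nV x * nV y)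
    (he : u - uh ∈ V) (hw : ∀ v ∈ V, a v w = ⟪u - uh, v⟫)
    (hinterp : nV (w - Iw) ≤ CI * h * nW w) (hcons : |a uh Iw - a u Iw| ≤ C₂ * h ^ 2 * nW w)
    (herr : nV (u - uh) ≤ C₁ * h) :
    ‖u - uh‖ ^ 2 ≤ (Ca * C₁ * CI + C₂) * h ^ 2 * nW w := by
  have hbdd : a (u - uh) (w - Iw) ≤ Ca * (C₁ * h) * (CI * h * nW w) :=
    le_mul_mul_of_abs_le_mul_mul (habdd _ _) hCa (hnV _) (hnV _) herr hinterp
  have hconsis : a u Iw - a uh Iw ≤ C₂ * h ^ 2 * nW w :=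
    (le_abs_self _).trans (abs_sub_comm (a u Iw) (a uh Iw) ▸ hcons)
  rw [sq_norm_sub_eq_of_adjoint he hw]
  linarith

end Duality

theorem abstract_aubin_nitsche_general {H : Type*} [NormedAddCommGroup H]
    [InnerProductSpace ℝ H]
    (V W : Submodule ℝ H)
    (nV nW : H → ℝ)
    (a : H →ₗ[ℝ] H →ₗ[ℝ] ℝ)
    (Ca CR CI C₁ C₂ : ℝ) (hCa : 0 ≤ Ca) (hCR : 0 ≤ CR) (hCI : 0 ≤ CI)
    (hC₁ : 0 ≤ C₁) (hC₂ : 0 ≤ C₂)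
    (hnV : ∀ x, 0 ≤ nV x)
    (habdd : ∀ x y, |a x y| ≤ Ca * nV x * nV y) :
    ∃ C : ℝ, ∀ (h : ℝ), 0 < h → ∀ (Vh : Submodule ℝ H), Vh ≤ V →
      ∀ u ∈ V, ∀ uh ∈ Vh,
      -- (i)+(ii)+(iv): regular solvability of the adjoint problem, interpolation,
      -- and consistency
      (∀ χ : H, ∃ w ∈ W, (∀ v ∈ V, a v w = ⟪χ, v⟫) ∧ nW w ≤ CR * ‖χ‖ ∧
        ∃ Iw ∈ Vh, nV (w - Iw) ≤ CI * h * nW w ∧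
          |a uh Iw - a u Iw| ≤ C₂ * h ^ 2 * nW w) →
      -- (iii): the H¹-type error estimate
      nV (u - uh) ≤ C₁ * h →
      ‖u - uh‖ ≤ C * h ^ 2 := by
  refine ⟨(Ca * C₁ * CI + C₂) * CR, fun h _ Vh hVh u hu uh huh hadj herr => ?_⟩
  obtain ⟨w, -, hw, hreg, Iw, -, hinterp, hcons⟩ := hadj (u - uh)
  have hK : 0 ≤ (Ca * C₁ * CI + C₂) * h ^ 2 := by positivity
  apply le_of_sq_le_mul (by positivity)
  calc ‖u - uh‖ ^ 2 ≤ (Ca * C₁ * CI + C₂) * h ^ 2 * nW w :=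
        sq_norm_sub_le_of_adjoint hCa hnV habdd (V.sub_mem hu (hVh huh)) hw hinterp hcons herr
    _ ≤ (Ca * C₁ * CI + C₂) * h ^ 2 * (CR * ‖u - uh‖) := mul_le_mul_of_nonneg_left hreg hK
    _ = (Ca * C₁ * CI + C₂) * CR * h ^ 2 * ‖u - uh‖ := by ring

/-- Abstract Aubin–Nitsche / duality `L²` estimate.  In a Hilbert space `H` with
subspaces `W ≤ V` carrying (stronger) norms `nV`, `nW`, let `a` be a bilinear form that
is bounded with respect to `nV`.  There is a constant `C` (depending only on the
constants `Ca, CR, CI, C₁, C₂`) such that: for every `h > 0`, every subspace `V_h ≤ V`,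
and every `u ∈ V`, `u_h ∈ V_h` with (i) solvable regular adjoint problems, (ii) an
interpolant with `nV(w_χ − I_h w_χ) ≤ CI h nW(w_χ)`, (iii) `nV(u − u_h) ≤ C₁ h`, and
(iv) the consistency bound `|a(u_h, I_h w_χ) − a(u, I_h w_χ)| ≤ C₂ h² nW(w_χ)`, one has
`‖u − u_h‖_H ≤ C h²`. -/
theorem abstract_aubin_nitsche {H : Type*} [NormedAddCommGroup H]
    [InnerProductSpace ℝ H]
    (V W : Submodule ℝ H) (hWV : W ≤ V)
    (nV nW : H → ℝ)
    (a : H →ₗ[ℝ] H →ₗ[ℝ] ℝ)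
    (Ca CR CI C₁ C₂ : ℝ) (hCa : 0 ≤ Ca) (hCR : 0 ≤ CR) (hCI : 0 ≤ CI)
    (hC₁ : 0 ≤ C₁) (hC₂ : 0 ≤ C₂)
    (hnV : ∀ x, 0 ≤ nV x) (hnW : ∀ x, 0 ≤ nW x)
    (habdd : ∀ x y, |a x y| ≤ Ca * nV x * nV y) :
    ∃ C : ℝ, ∀ (h : ℝ), 0 < h → ∀ (Vh : Submodule ℝ H), Vh ≤ V →
      ∀ u ∈ V, ∀ uh ∈ Vh,
      -- (i)+(ii)+(iv): regular solvability of the adjoint problem, interpolation,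
      -- and consistency
      (∀ χ : H, ∃ w ∈ W, (∀ v ∈ V, a v w = ⟪χ, v⟫) ∧ nW w ≤ CR * ‖χ‖ ∧
        ∃ Iw ∈ Vh, nV (w - Iw) ≤ CI * h * nW w ∧
          |a uh Iw - a u Iw| ≤ C₂ * h ^ 2 * nW w) →
      -- (iii): the H¹-type error estimate
      nV (u - uh) ≤ C₁ * h →
      ‖u - uh‖ ≤ C * h ^ 2 :=
  abstract_aubin_nitsche_general V W nV nW a Ca CR CI C₁ C₂ hCa hCR hCI hC₁ hC₂ hnV habdd
end

section
/- Let D ⊆ ℝ^d be a nonempty closed set, x ∉ D with unique metric projection p = P_D(x), and suppose near p, after a rotation, ∂D is the graph of a Lipschitz function φ : V → ℝ (V ⊆ ℝ^{d−1} open) with D locally equal to the subgraph {(y, y_d) : y_d ≤ φ(y)}. Writing p = (y*, φ(y*)) and x = (x̃, x_d), the first-order optimality condition 0 ∈ ∂Φ(y*) for Φ(y) = ½|(y, φ(y)) − x|² implies that x − p = Σ_{j=1}^m α_j lim_{i→∞} n_D(y_i^{(j)}, φ(y_i^{(j)})) for some m ≥ 1, scalars α_j ≥ 0, and sequences y_i^{(j)}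 → y* at which φ is differentiable and the unit normals n_D(y, φ(y)) = (−∇φ(y), 1)/√(|∇φ(y)|² + 1) converge. -/
open Filter Topology

/-- The inclusion `ℝ^m × ℝ → ℝ^{m+1}` (Euclidean, i.e. `ℓ²`, product). -/
noncomputable def embGraph (m : ℕ) (y : EuclideanSpace ℝ (Fin m)) (t : ℝ) :
    WithLp 2 (EuclideanSpace ℝ (Fin m) × ℝ) :=
  (WithLp.equiv 2 (EuclideanSpace ℝ (Fin m) × ℝ)).symm (y, t)

/-- First (horizontal) component of a point of `ℝ^m ×₂ ℝ`. -/
noncomputable def projH (m : ℕ) (z : WithLp 2 (EuclideanSpace ℝ (Fin m) × ℝ)) :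
    EuclideanSpace ℝ (Fin m) :=
  ((WithLp.equiv 2 (EuclideanSpace ℝ (Fin m) × ℝ)) z).1

/-- Last (vertical) component of a point of `ℝ^m ×₂ ℝ`. -/
noncomputable def projV (m : ℕ) (z : WithLp 2 (EuclideanSpace ℝ (Fin m) × ℝ)) : ℝ :=
  ((WithLp.equiv 2 (EuclideanSpace ℝ (Fin m) × ℝ)) z).2

open MeasureTheory Set Metric
open scoped NNReal

/-!
Let `g` be a Lipschitz extension of `φ` to all of `ℝ^m`, write `x = (x̃, x_d)` and
`c = x_d - g y*`. Graph points near `p` and the points just below `p` lie in `D`, so `y*` is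
a local minimum of `Φ y = ‖x̃ - y‖² + (x_d - g y)²` and `c ≥ 0`; moving `y` from `y*` towards
`x̃` shows that `c = 0` would force `x = p`, hence `c > 0`.

Let `G` be the compact set of reachable gradients of `g` at `y*`. If `w = c⁻¹ (y* - x̃)` were
not in the convex hull of `G`, a separating direction `e` with `⟪e, q⟫ < u < ⟪e, w⟫` on `G`
would give `Dg(z) e ≤ u` at every differentiability point `z` near `y*`, hence
`g y* - g (y* - t e) ≤ u t` for small `t > 0`, and `Φ (y* - t e) < Φ y*` at first order in
`t`. So `w = ∑ λⱼ qⱼ` with `qⱼ ∈ G`, and `x - p = (x̃ - y*, c) = ∑ c λⱼ (-qⱼ, 1)` is a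
nonnegative combination of the limiting normals `(-qⱼ, 1) / √(‖qⱼ‖² + 1)`.
-/

theorem isCompact_convexHull {E : Type*} [NormedAddCommGroup E] [NormedSpace ℝ E]
    [FiniteDimensional ℝ E] {s : Set E} (hs : IsCompact s) : IsCompact (convexHull ℝ s) := by
  classical
  rcases s.eq_empty_or_nonempty with rfl | ⟨s₀, hs₀⟩
  · simp
  set N := Module.finrank ℝ E + 1
  let T : (Fin N → ℝ) × (Fin N → E) → E := fun p => ∑ i, p.1 i • p.2 i
  suffices convexHull ℝ s = T '' (stdSimplex ℝ (Fin N) ×ˢ univ.pi fun _ => s) from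
    this ▸ ((isCompact_stdSimplex ℝ _).prod (isCompact_univ_pi fun _ => hs)).image
      (by fun_prop)
  refine Subset.antisymm (fun x hx => ?_) ?_
  · -- Carathéodory: `finrank + 1` points suffice; pad the combination with zero weights.
    obtain ⟨ι, _, z, w, hzs, hind, hw₀, hw₁, rfl⟩ := eq_pos_convex_span_of_mem_convexHull hx
    have hcard : Fintype.card ι ≤ N :=
      hind.card_le_finrank_succ.trans (Nat.add_le_add_right (Submodule.finrank_le _) 1)
    let f : ι ↪ Fin N := (Fintype.equivFin ι).toEmbedding.trans (Fin.castLEEmb hcard)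
    have hoff : ∀ j ∉ range f, ¬∃ i, f i = j := fun j hj => by simpa using hj
    refine ⟨(Function.extend f w 0, Function.extend f z fun _ => s₀),
      ⟨⟨fun j => ?_, ?_⟩, ?_⟩, ?_⟩
    · by_cases hj : j ∈ range f
      · obtain ⟨i, rfl⟩ := hj
        simpa [f.injective.extend_apply] using (hw₀ i).le
      · simp [Function.extend_apply' _ _ _ (hoff j hj)]
    · rw [← hw₁]
      refine (Fintype.sum_of_injective f f.injective _ _ (fun j hj => ?_) fun i => ?_).symm
      · simp [Function.extend_apply' _ _ _ (hoff j hj)]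
      · simp [f.injective.extend_apply]
    · intro j _
      by_cases hj : j ∈ range f
      · obtain ⟨i, rfl⟩ := hj
        simpa [f.injective.extend_apply] using hzs (mem_range_self i)
      · simpa [Function.extend_apply' _ _ _ (hoff j hj)] using hs₀
    · refine (Fintype.sum_of_injective f f.injective _ _ (fun j hj => ?_) fun i => ?_).symm
      · simp [Function.extend_apply' _ _ _ (hoff j hj)]
      · simp [f.injective.extend_apply]
  · rintro _ ⟨⟨w, z⟩, ⟨⟨hw₀, hw₁⟩, hz⟩, rfl⟩
    exact (convex_convexHull ℝ s).sum_mem (fun i _ => hw₀ i) hw₁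
      fun i _ => subset_convexHull ℝ s (hz i (mem_univ i))

theorem exists_fin_of_mem_convexHull {E : Type*} [AddCommGroup E] [Module ℝ E] {s : Set E}
    {x : E} (hx : x ∈ convexHull ℝ s) :
    ∃ (k : ℕ) (w : Fin k → ℝ) (z : Fin k → E),
      (∀ j, 0 ≤ w j) ∧ ∑ j, w j = 1 ∧ (∀ j, z j ∈ s) ∧ ∑ j, w j • z j = x := by
  obtain ⟨ι, _, w, z, hw₀, hw₁, hz, rfl⟩ := mem_convexHull_iff_exists_fintype.1 hx
  let e := (Fintype.equivFin ι).symm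
  exact ⟨_, w ∘ e, z ∘ e, fun j => hw₀ _, (e.sum_comp w).trans hw₁, fun j => hz _,
    e.sum_comp fun i => w i • z i⟩

section LipschitzMeanValue

variable {E : Type*} [NormedAddCommGroup E] [NormedSpace ℝ E] [FiniteDimensional ℝ E]
  {g : E → ℝ} {K : ℝ≥0}

theorem LipschitzWith.hasDerivAt_setIntegral_comp_add_smul [MeasurableSpace E] [BorelSpace E]
    (μ : Measure E) [μ.IsAddHaarMeasure] (hg : LipschitzWith K g) (d : E) {B : Set E}
    (hB : IsCompact B) (s : ℝ) :
    HasDerivAt (fun s : ℝ => ∫ z in B, g (z + s • d) ∂μ)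
      (∫ z in B, fderiv ℝ g (z + s • d) d ∂μ) s := by
  have hline (z : E) : LipschitzWith (K * ‖d‖₊) fun s : ℝ => g (z + s • d) :=
    LipschitzWith.of_dist_le_mul fun s s' => by
      calc dist (g (z + s • d)) (g (z + s' • d)) ≤ K * dist (z + s • d) (z + s' • d) :=
            hg.dist_le_mul _ _
        _ = K * ‖d‖ * dist s s' := by
            rw [dist_add_left, dist_eq_norm, ← sub_smul, norm_smul, Real.dist_eq,
              Real.norm_eq_abs]
            ring
  refine (hasDerivAt_integral_of_dominated_loc_of_lip (bound := fun _ => K * ‖d‖) univ_mem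
    (Eventually.of_forall fun s => ?_) ?_ ?_ (Eventually.of_forall fun z => ?_)
    (integrableOn_const hB.measure_lt_top.ne) ?_).2
  · exact (hg.continuous.comp (continuous_add_const _)).aestronglyMeasurable
  · exact (hg.continuous.comp (continuous_add_const _)).continuousOn.integrableOn_compact hB
  · exact ((measurable_fderiv_apply_const ℝ g d).comp
      (measurable_add_const _)).aestronglyMeasurable
  · convert (hline z).lipschitzOnWith (s := univ)
    ext
    simp
  · refine ae_restrict_of_ae
      (((measurePreserving_add_right μ (s • d)).quasiMeasurePreserving.ae
        hg.ae_differentiableAt).mono fun z hz => ?_)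
    have := hz.hasFDerivAt.comp_hasDerivAt s (((hasDerivAt_id s).smul_const d).const_add z)
    rwa [one_smul] at this

theorem LipschitzWith.setIntegral_comp_add_smul_sub_le [MeasurableSpace E] [BorelSpace E]
    (μ : Measure E) [μ.IsAddHaarMeasure] (hg : LipschitzWith K g) {d : E} {B : Set E}
    (hB : IsCompact B) {t u : ℝ} (ht : 0 ≤ t)
    (hub : ∀ s ∈ Icc 0 t, ∀ z ∈ B, DifferentiableAt ℝ g (z + s • d) →
      fderiv ℝ g (z + s • d) d ≤ u) :
    ∫ z in B, g (z + t • d) ∂μ - ∫ z in B, g z ∂μ ≤ u * μ.real B * t := by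
  have hderiv := hg.hasDerivAt_setIntegral_comp_add_smul μ d hB
  have hbound : ∀ s ∈ interior (Icc 0 t),
      deriv (fun s : ℝ => ∫ z in B, g (z + s • d) ∂μ) s ≤ u * μ.real B := by
    intro s hs
    rw [interior_Icc] at hs
    rw [(hderiv s).deriv, mul_comm, ← smul_eq_mul, ← setIntegral_const]
    refine setIntegral_mono_on_ae ?_ (integrableOn_const hB.measure_lt_top.ne)
      hB.measurableSet ?_
    · refine Integrable.mono' (integrableOn_const hB.measure_lt_top.ne (C := K * ‖d‖))
        ((measurable_fderiv_apply_const ℝ g d).comp (measurable_add_const _)).aestronglyMeasurable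
        (Eventually.of_forall fun z => ?_)
      exact ((fderiv ℝ g _).le_opNorm d).trans
        (mul_le_mul_of_nonneg_right (norm_fderiv_le_of_lipschitz ℝ hg) (norm_nonneg d))
    · filter_upwards [(measurePreserving_add_right μ (s • d)).quasiMeasurePreserving.ae
        hg.ae_differentiableAt] with z hz hzB
      exact hub s (Ioo_subset_Icc_self hs) z hzB hz
  simpa using (convex_Icc 0 t).image_sub_le_mul_sub_of_deriv_le
    (fun s _ => (hderiv s).continuousAt.continuousWithinAt)
    (fun s _ => (hderiv s).differentiableAt.differentiableWithinAt) hbound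
    0 (left_mem_Icc.2 ht) t (right_mem_Icc.2 ht) ht

theorem LipschitzWith.sub_le_mul_add_of_fderiv_apply_le (hg : LipschitzWith K g)
    {a d : E} {ρ t u σ : ℝ}
    (hub : ∀ z ∈ ball a ρ, DifferentiableAt ℝ g z → fderiv ℝ g z d ≤ u)
    (ht : 0 ≤ t) (hσ : 0 < σ) (hσρ : σ + t * ‖d‖ < ρ) :
    g a - g (a - t • d) ≤ u * t + 2 * K * σ := by
  -- `g` may be differentiable nowhere on the segment itself, so average over the translates
  -- of a small ball, almost all of which consist of differentiability points (Rademacher).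
  borelize E
  let μ : Measure E := Measure.addHaar
  set B := closedBall (a - t • d) σ
  have hB : IsCompact B := isCompact_closedBall _ _
  have hμB : 0 < μ.real B :=
    ENNReal.toReal_pos (measure_closedBall_pos μ _ hσ).ne' hB.measure_lt_top.ne
  have hshift (z : E) : dist (z + t • d) a = dist z (a - t • d) := by
    rw [← dist_add_right z (a - t • d) (t • d), sub_add_cancel]
  have htube : ∀ s ∈ Icc 0 t, ∀ z ∈ B, z + s • d ∈ ball a ρ := by
    rintro s ⟨hs0, hst⟩ z hz
    rw [mem_ball]
    calc dist (z + s • d) a ≤ dist (z + s • d) (z + t • d) + dist (z + t • d) a :=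
          dist_triangle _ _ _
      _ ≤ (t - s) * ‖d‖ + σ := by
          gcongr
          · rw [dist_add_left, dist_eq_norm, ← sub_smul, norm_smul, Real.norm_eq_abs,
              abs_of_nonpos (by linarith)]
            linarith
          · rw [hshift]; exact hz
      _ < ρ := by nlinarith [norm_nonneg d]
  have hpt : ∀ z ∈ B, g a - g (a - t • d) - 2 * K * σ ≤ g (z + t • d) - g z := by
    intro z hz
    have h₁ := hg.dist_le_mul (z + t • d) a
    have h₂ := hg.dist_le_mul z (a - t • d)
    rw [hshift, Real.dist_eq, abs_le] at h₁
    rw [Real.dist_eq, abs_le] at h₂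
    have hzσ : dist z (a - t • d) ≤ σ := hz
    nlinarith [K.coe_nonneg]
  have hlow : (g a - g (a - t • d) - 2 * K * σ) * μ.real B ≤
      ∫ z in B, g (z + t • d) ∂μ - ∫ z in B, g z ∂μ := by
    have hint : IntegrableOn g B μ := hg.continuous.continuousOn.integrableOn_compact hB
    have hint' : IntegrableOn (fun z => g (z + t • d)) B μ :=
      (hg.continuous.comp (continuous_add_const _)).continuousOn.integrableOn_compact hB
    rw [← integral_sub hint' hint, mul_comm, ← smul_eq_mul, ← setIntegral_const]
    exact setIntegral_mono_on (integrableOn_const hB.measure_lt_top.ne) (hint'.sub hint)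
      hB.measurableSet hpt
  have hup := hg.setIntegral_comp_add_smul_sub_le μ hB ht
    (fun s hs z hz => hub _ (htube s hs z hz))
  linarith [le_of_mul_le_mul_right (hlow.trans (hup.trans_eq (mul_right_comm _ _ _))) hμB]

theorem LipschitzWith.sub_le_mul_of_fderiv_apply_le (hg : LipschitzWith K g) {a d : E}
    {ρ t u : ℝ} (hub : ∀ z ∈ ball a ρ, DifferentiableAt ℝ g z → fderiv ℝ g z d ≤ u)
    (ht : 0 ≤ t) (htρ : t * ‖d‖ < ρ) :
    g a - g (a - t • d) ≤ u * t := by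
  have hlim : Tendsto (fun σ : ℝ => u * t + 2 * K * σ) (𝓝[>] 0) (𝓝 (u * t)) :=
    tendsto_nhdsWithin_of_tendsto_nhds
      (by simpa using (by fun_prop : Continuous fun σ : ℝ => u * t + 2 * K * σ).tendsto 0)
  refine ge_of_tendsto hlim (mem_of_superset (Ioo_mem_nhdsGT (sub_pos.2 htρ)) ?_)
  rintro σ ⟨hσ, hσρ⟩
  exact hg.sub_le_mul_add_of_fderiv_apply_le hub ht hσ (by linarith)

end LipschitzMeanValue

section ReachableGradients

variable {E : Type*} [NormedAddCommGroup E] [InnerProductSpace ℝ E] [CompleteSpace E]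

-- For Lipschitz `f` and `s ∈ 𝓝 a`, the convex hull of this set is Clarke's subdifferential.
def reachableGradients (f : E → ℝ) (s : Set E) (a : E) : Set E :=
  {q | ∃ y : ℕ → E, (∀ i, y i ∈ s ∧ DifferentiableAt ℝ f (y i)) ∧
    Tendsto y atTop (𝓝 a) ∧ Tendsto (fun i => gradient f (y i)) atTop (𝓝 q)}

theorem reachableGradients_subset_of_eqOn {f g : E → ℝ} {s : Set E} (hs : IsOpen s)
    (hfg : EqOn f g s) (a : E) : reachableGradients f s a ⊆ reachableGradients g s a := by
  rintro q ⟨y, hy, hya, hyq⟩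
  have hloc (i : ℕ) : f =ᶠ[𝓝 (y i)] g := eventuallyEq_of_mem (hs.mem_nhds (hy i).1) hfg
  refine ⟨y, fun i => ⟨(hy i).1, (hloc i).differentiableAt_iff.1 (hy i).2⟩, hya, ?_⟩
  simpa only [(hloc _).gradient_eq] using hyq

theorem reachableGradients_congr {f g : E → ℝ} {s : Set E} (hs : IsOpen s) (hfg : EqOn f g s)
    (a : E) : reachableGradients f s a = reachableGradients g s a :=
  (reachableGradients_subset_of_eqOn hs hfg a).antisymm
    (reachableGradients_subset_of_eqOn hs hfg.symm a)

theorem isClosed_reachableGradients (f : E → ℝ) (s : Set E) (a : E) :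
    IsClosed (reachableGradients f s a) := by
  let P : Set (E × E) := (fun z => (z, gradient f z)) '' {z | z ∈ s ∧ DifferentiableAt ℝ f z}
  suffices reachableGradients f s a = (fun q => (a, q)) ⁻¹' closure P from
    this ▸ isClosed_closure.preimage (by fun_prop)
  ext q
  simp only [mem_preimage, mem_closure_iff_seq_limit, P, mem_image, nhds_prod_eq,
    tendsto_prod_iff']
  constructor
  · rintro ⟨y, hy, hya, hyq⟩
    exact ⟨fun i => (y i, gradient f (y i)), fun i => ⟨y i, hy i, rfl⟩, hya, hyq⟩
  · rintro ⟨x, hx, hxa, hxq⟩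
    choose y hy hyx using hx
    refine ⟨y, hy, ?_, ?_⟩
    · simpa [← hyx] using hxa
    · simpa [← hyx] using hxq

theorem LipschitzWith.norm_gradient_le {g : E → ℝ} {K : ℝ≥0} (hg : LipschitzWith K g)
    (z : E) : ‖gradient g z‖ ≤ K :=
  ((InnerProductSpace.toDual ℝ E).symm.norm_map _).trans_le (norm_fderiv_le_of_lipschitz ℝ hg)

variable [FiniteDimensional ℝ E] {g : E → ℝ} {K : ℝ≥0} {s : Set E} {a : E}

theorem LipschitzWith.isCompact_reachableGradients (hg : LipschitzWith K g) :
    IsCompact (reachableGradients g s a) := by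
  refine (isCompact_closedBall (0 : E) K).of_isClosed_subset
    (isClosed_reachableGradients g s a) ?_
  rintro q ⟨y, -, -, hyq⟩
  exact isClosed_closedBall.mem_of_tendsto hyq
    (Eventually.of_forall fun i => mem_closedBall_zero_iff.2 (hg.norm_gradient_le _))

theorem LipschitzWith.exists_mem_reachableGradients_of_frequently (hg : LipschitzWith K g)
    {C : Set E} (hC : IsClosed C)
    (h : ∃ᶠ z in 𝓝 a, z ∈ s ∧ DifferentiableAt ℝ g z ∧ gradient g z ∈ C) :
    ∃ q ∈ reachableGradients g s a, q ∈ C := by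
  obtain ⟨y, hya, hy⟩ := frequently_iff_seq_forall.1 h
  obtain ⟨q, hqC, σ, hσ, hq⟩ :=
    ((isCompact_closedBall (0 : E) K).inter_right hC).tendsto_subseq
      (x := fun i => gradient g (y i))
      fun i => ⟨mem_closedBall_zero_iff.2 (hg.norm_gradient_le _), (hy i).2.2⟩
  exact ⟨q, ⟨y ∘ σ, fun i => ⟨(hy _).1, (hy _).2.1⟩, hya.comp hσ.tendsto_atTop, hq⟩,
    hqC.2⟩

theorem LipschitzWith.eventually_fderiv_apply_le (hg : LipschitzWith K g) {e : E} {u : ℝ}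
    (hu : ∀ q ∈ reachableGradients g s a, inner ℝ e q < u) :
    ∀ᶠ z in 𝓝 a, z ∈ s → DifferentiableAt ℝ g z → fderiv ℝ g z e ≤ u := by
  by_contra h
  have hfreq : ∃ᶠ z in 𝓝 a,
      z ∈ s ∧ DifferentiableAt ℝ g z ∧ gradient g z ∈ {q | u ≤ inner ℝ e q} := by
    refine (not_eventually.1 h).mono fun z hz => ?_
    push Not at hz
    obtain ⟨hzs, hzd, hzu⟩ := hz
    refine ⟨hzs, hzd, ?_⟩
    rw [mem_ofPred_eq, real_inner_comm, inner_gradient_left]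
    exact hzu.le
  obtain ⟨q, hq, hqu⟩ := hg.exists_mem_reachableGradients_of_frequently
    (isClosed_le continuous_const (by fun_prop)) hfreq
  exact (hu q hq).not_ge hqu

end ReachableGradients

theorem nonneg_of_eventually_nonneg_mul_add_mul_sq {A B : ℝ}
    (h : ∀ᶠ t in 𝓝[>] (0 : ℝ), 0 ≤ A * t + B * t ^ 2) : 0 ≤ A := by
  have hlim : Tendsto (fun t : ℝ => A + B * t) (𝓝[>] 0) (𝓝 A) :=
    tendsto_nhdsWithin_of_tendsto_nhds
      (by simpa using (by fun_prop : Continuous fun t : ℝ => A + B * t).tendsto 0)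
  refine ge_of_tendsto hlim ((h.and self_mem_nhdsWithin).mono fun t ⟨ht, htpos⟩ => ?_)
  exact (mul_nonneg_iff_of_pos_left (c := t) htpos).1 (by linear_combination ht)

section FirstOrderCondition

variable {E : Type*} [NormedAddCommGroup E] [InnerProductSpace ℝ E]
  {g : E → ℝ} {K : ℝ≥0} {a b : E} {h : ℝ}

theorem LipschitzWith.inner_sub_le_of_isLocalMin (hg : LipschitzWith K g)
    (hmin : IsLocalMin (fun y => ‖b - y‖ ^ 2 + (h - g y) ^ 2) a) (hc : 0 ≤ h - g a)
    {e : E} {u : ℝ} (hdec : ∀ᶠ t in 𝓝[>] 0, g a - g (a - t • e) ≤ u * t) :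
    inner ℝ (a - b) e ≤ (h - g a) * u := by
  have hpath : Tendsto (fun t : ℝ => a - t • e) (𝓝[>] 0) (𝓝 a) :=
    tendsto_nhdsWithin_of_tendsto_nhds
      (by simpa using (by fun_prop : Continuous fun t : ℝ => a - t • e).tendsto 0)
  suffices 0 ≤ 2 * (inner ℝ (b - a) e + (h - g a) * u) by
    rw [← neg_sub b a, inner_neg_left]
    linarith
  refine nonneg_of_eventually_nonneg_mul_add_mul_sq (B := (1 + K ^ 2) * ‖e‖ ^ 2) ?_
  filter_upwards [hpath.eventually hmin, hdec, self_mem_nhdsWithin] with t hmin_t hdec_t ht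
  have hlip : |g (a - t • e) - g a| ≤ K * (t * ‖e‖) := by
    have := hg.dist_le_mul (a - t • e) a
    rwa [dist_eq_norm (a - t • e), sub_sub_cancel_left, norm_neg, norm_smul,
      Real.norm_of_nonneg ht.out.le, Real.dist_eq] at this
  have hnorm : ‖b - (a - t • e)‖ ^ 2 =
      ‖b - a‖ ^ 2 + 2 * t * inner ℝ (b - a) e + t ^ 2 * ‖e‖ ^ 2 := by
    rw [sub_sub_eq_add_sub, add_sub_right_comm, norm_add_sq_real, inner_smul_right, norm_smul,
      Real.norm_of_nonneg ht.out.le]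
    ring
  simp only [hnorm] at hmin_t
  nlinarith [abs_le.1 hlip, sq_abs (g (a - t • e) - g a),
    sq_le_sq' (abs_le.1 hlip).1 (abs_le.1 hlip).2]

theorem LipschitzWith.eq_of_isLocalMin_of_eq (hg : LipschitzWith K g)
    (hmin : IsLocalMin (fun y => ‖b - y‖ ^ 2 + (h - g y) ^ 2) a) (hc : h = g a) : a = b := by
  have hdec : ∀ᶠ t in 𝓝[>] 0, g a - g (a - t • (a - b)) ≤ K * ‖a - b‖ * t := by
    filter_upwards [self_mem_nhdsWithin] with t ht
    have := hg.dist_le_mul a (a - t • (a - b))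
    rw [dist_eq_norm (a : E), sub_sub_cancel, norm_smul, Real.norm_of_nonneg ht.out.le,
      Real.dist_eq] at this
    linarith [le_abs_self (g a - g (a - t • (a - b)))]
  have := hg.inner_sub_le_of_isLocalMin hmin (by rw [hc, sub_self]) hdec
  rw [hc, sub_self, zero_mul, real_inner_self_nonpos, sub_eq_zero] at this
  exact this

end FirstOrderCondition

section ClarkeStationarity

variable {E : Type*} [NormedAddCommGroup E] [InnerProductSpace ℝ E] [CompleteSpace E]
  [FiniteDimensional ℝ E] {g : E → ℝ} {K : ℝ≥0} {s : Set E} {a b : E} {h : ℝ}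

theorem LipschitzWith.smul_sub_mem_convexHull_reachableGradients (hg : LipschitzWith K g)
    (hs : s ∈ 𝓝 a) (hmin : IsLocalMin (fun y => ‖b - y‖ ^ 2 + (h - g y) ^ 2) a)
    (hc : 0 < h - g a) :
    (h - g a)⁻¹ • (a - b) ∈ convexHull ℝ (reachableGradients g s a) := by
  by_contra hnot
  obtain ⟨f, u, hfG, hfw⟩ := geometric_hahn_banach_closed_point (convex_convexHull ℝ _)
    (isCompact_convexHull hg.isCompact_reachableGradients).isClosed hnot
  set e := (InnerProductSpace.toDual ℝ E).symm f
  have hfe (v : E) : f v = inner ℝ e v := InnerProductSpace.toDual_symm_apply.symm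
  have hGe : ∀ q ∈ reachableGradients g s a, inner ℝ e q < u :=
    fun q hq => hfe q ▸ hfG q (subset_convexHull ℝ _ hq)
  obtain ⟨ρ, hρ, hball⟩ :=
    Metric.eventually_nhds_iff_ball.1 ((hg.eventually_fderiv_apply_le hGe).and hs)
  have hdec : ∀ᶠ t in 𝓝[>] 0, g a - g (a - t • e) ≤ u * t := by
    filter_upwards [Ioo_mem_nhdsGT (div_pos hρ (by positivity : (0 : ℝ) < ‖e‖ + 1))]
      with t ⟨ht₀, htρ⟩
    refine hg.sub_le_mul_of_fderiv_apply_le (fun z hz => (hball z hz).1 (hball z hz).2) ht₀.le ?_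
    rw [lt_div_iff₀ (by positivity)] at htρ
    nlinarith [norm_nonneg e]
  have hle := hg.inner_sub_le_of_isLocalMin hmin hc.le hdec
  rw [hfe, inner_smul_right, real_inner_comm, lt_inv_mul_iff₀ hc] at hfw
  linarith

end ClarkeStationarity

section GraphCoordinates

variable {m : ℕ}

local notation "E" => EuclideanSpace ℝ (Fin m)
local notation "Z" => WithLp 2 (EuclideanSpace ℝ (Fin m) × ℝ)

theorem continuous_embGraph : Continuous fun q : E × ℝ => embGraph m q.1 q.2 :=
  (WithLp.prodContinuousLinearEquiv 2 ℝ E ℝ).symm.continuous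

theorem dist_embGraph_sq (x : Z) (y : E) (t : ℝ) :
    dist x (embGraph m y t) ^ 2 = ‖projH m x - y‖ ^ 2 + (projV m x - t) ^ 2 := by
  rw [dist_eq_norm, WithLp.prod_norm_sq_eq_of_L2, Real.norm_eq_abs, sq_abs]
  rfl

-- The outward unit normal `n_D` of the subgraph at a point where `∇φ = q`.
noncomputable def graphNormal (m : ℕ) (q : EuclideanSpace ℝ (Fin m)) :
    WithLp 2 (EuclideanSpace ℝ (Fin m) × ℝ) :=
  (Real.sqrt (‖q‖ ^ 2 + 1))⁻¹ • embGraph m (-q) 1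

theorem continuous_graphNormal : Continuous (graphNormal m) :=
  ((by fun_prop : Continuous fun q : E => Real.sqrt (‖q‖ ^ 2 + 1)).inv₀
    fun q => by positivity).smul
      (continuous_embGraph.comp (continuous_neg.prodMk continuous_const))

theorem sqrt_smul_graphNormal (q : E) :
    Real.sqrt (‖q‖ ^ 2 + 1) • graphNormal m q = embGraph m (-q) 1 :=
  smul_inv_smul₀ (by positivity) _

theorem embGraph_eq_sum_smul_graphNormal {k : ℕ} (c : ℝ) (w : Fin k → ℝ) (q : Fin k → E) :
    embGraph m (-(c • ∑ j, w j • q j)) (c * ∑ j, w j) =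
      ∑ j, (c * w j * Real.sqrt (‖q j‖ ^ 2 + 1)) • graphNormal m (q j) := by
  simp_rw [mul_assoc, mul_smul, sqrt_smul_graphNormal, embGraph, WithLp.equiv_symm_apply,
    ← WithLp.toLp_smul, ← WithLp.toLp_sum]
  congr 1
  ext
  · simp [Finset.smul_sum, Prod.fst_sum]
  · simp [Finset.mul_sum, Prod.snd_sum]

theorem exists_graphNormal_combination_of_mem_convexHull {φ : E → ℝ} {V : Set E} {a b : E}
    {c : ℝ} (hc : 0 < c) (h : c⁻¹ • (a - b) ∈ convexHull ℝ (reachableGradients φ V a)) :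
    ∃ k : ℕ, 1 ≤ k ∧ ∃ (α : Fin k → ℝ) (ν : Fin k → Z) (y : Fin k → ℕ → E),
      (∀ j, 0 ≤ α j) ∧ (∀ j, Tendsto (y j) atTop (𝓝 a)) ∧
      (∀ j i, y j i ∈ V ∧ DifferentiableAt ℝ φ (y j i)) ∧
      (∀ j, Tendsto (fun i => graphNormal m (gradient φ (y j i))) atTop (𝓝 (ν j))) ∧
      embGraph m (b - a) c = ∑ j, α j • ν j := by
  obtain ⟨k, w, q, hw₀, hw₁, hq, hsum⟩ := exists_fin_of_mem_convexHull h
  have hk : 1 ≤ k := Nat.one_le_iff_ne_zero.2 fun hk => by subst hk; simp at hw₁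
  choose y hy hya hyq using hq
  refine ⟨k, hk, fun j => c * w j * Real.sqrt (‖q j‖ ^ 2 + 1),
    fun j => graphNormal m (q j), y, fun j => by have := hw₀ j; positivity, hya, hy,
    fun j => (continuous_graphNormal.tendsto _).comp (hyq j), ?_⟩
  rw [← embGraph_eq_sum_smul_graphNormal, hsum, hw₁, mul_one, smul_inv_smul₀ hc.ne', neg_sub]

theorem isLocalMin_of_subgraph {D : Set Z} {x : Z} {V : Set E} {g : E → ℝ} {ystar : E}
    (hmin : ∀ q ∈ D, dist x (embGraph m ystar (g ystar)) ≤ dist x q)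
    (hsub : ∀ᶠ z in 𝓝 (embGraph m ystar (g ystar)),
      projV m z ≤ g (projH m z) → projH m z ∈ V → z ∈ D)
    (hV : V ∈ 𝓝 ystar) (hg : ContinuousAt g ystar) :
    IsLocalMin (fun y => ‖projH m x - y‖ ^ 2 + (projV m x - g y) ^ 2) ystar := by
  have hgraph : Tendsto (fun y => embGraph m y (g y)) (𝓝 ystar)
      (𝓝 (embGraph m ystar (g ystar))) :=
    continuous_embGraph.continuousAt.comp (continuousAt_id.prodMk hg)
  filter_upwards [hgraph.eventually hsub, hV] with y hy hyV
  rw [← dist_embGraph_sq, ← dist_embGraph_sq]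
  exact pow_le_pow_left₀ dist_nonneg (hmin _ (hy le_rfl hyV)) 2

theorem sub_nonneg_of_subgraph {D : Set Z} {x : Z} {V : Set E} {g : E → ℝ} {ystar : E}
    (hmin : ∀ q ∈ D, dist x (embGraph m ystar (g ystar)) ≤ dist x q)
    (hsub : ∀ᶠ z in 𝓝 (embGraph m ystar (g ystar)),
      projV m z ≤ g (projH m z) → projH m z ∈ V → z ∈ D)
    (hyV : ystar ∈ V) : 0 ≤ projV m x - g ystar := by
  have hdown : Tendsto (fun t : ℝ => embGraph m ystar (g ystar - t)) (𝓝[>] 0)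
      (𝓝 (embGraph m ystar (g ystar))) := by
    have hcont : Continuous fun t : ℝ => embGraph m ystar (g ystar - t) :=
      continuous_embGraph.comp (continuous_const.prodMk (continuous_const.sub continuous_id))
    exact tendsto_nhdsWithin_of_tendsto_nhds (hcont.tendsto' 0 _ (by rw [sub_zero]))
  suffices 0 ≤ 2 * (projV m x - g ystar) by linarith
  refine nonneg_of_eventually_nonneg_mul_add_mul_sq (B := 1) ?_
  filter_upwards [hdown.eventually hsub, self_mem_nhdsWithin] with t ht htpos
  have := pow_le_pow_left₀ dist_nonneg
    (hmin _ (ht (by simp [projV, projH, embGraph, htpos.out.le]) hyV)) 2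
  rw [dist_embGraph_sq, dist_embGraph_sq] at this
  nlinarith

end GraphCoordinates

theorem projection_direction_is_combination_of_limiting_normals_general (m : ℕ)
    (D : Set (WithLp 2 (EuclideanSpace ℝ (Fin m) × ℝ)))
    (x p : WithLp 2 (EuclideanSpace ℝ (Fin m) × ℝ)) (hx : x ∉ D) (hp : p ∈ D)
    (hmin : ∀ q ∈ D, dist x p ≤ dist x q)
    (V : Set (EuclideanSpace ℝ (Fin m))) (hVopen : IsOpen V)
    (ystar : EuclideanSpace ℝ (Fin m)) (hyV : ystar ∈ V)
    (φ : EuclideanSpace ℝ (Fin m) → ℝ) (L : NNReal) (hφ : LipschitzOnWith L φ V)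
    (hpeq : p = embGraph m ystar (φ ystar))
    (U : Set (WithLp 2 (EuclideanSpace ℝ (Fin m) × ℝ))) (hU : U ∈ nhds p)
    (hgraph : D ∩ U = {z ∈ U | projV m z ≤ φ (projH m z) ∧ projH m z ∈ V}) :
    ∃ k : ℕ, 1 ≤ k ∧
      ∃ (α : Fin k → ℝ) (ν : Fin k → WithLp 2 (EuclideanSpace ℝ (Fin m) × ℝ))
        (y : Fin k → ℕ → EuclideanSpace ℝ (Fin m)),
        (∀ j, 0 ≤ α j) ∧
        (∀ j, Tendsto (y j) atTop (nhds ystar)) ∧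
        (∀ j i, y j i ∈ V ∧ DifferentiableAt ℝ φ (y j i)) ∧
        (∀ j, Tendsto
          (fun i => (Real.sqrt (‖gradient φ (y j i)‖ ^ 2 + 1))⁻¹ •
            embGraph m (-(gradient φ (y j i))) 1) atTop (nhds (ν j))) ∧
        x - p = ∑ j, α j • ν j := by
  obtain ⟨g, hg, hφg⟩ := hφ.extend_real
  rw [hφg hyV] at hpeq
  subst hpeq
  have hsub : ∀ᶠ z in 𝓝 (embGraph m ystar (g ystar)),
      projV m z ≤ g (projH m z) → projH m z ∈ V → z ∈ D := by
    filter_upwards [hU] with z hzU hzg hzV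
    exact (hgraph.ge ⟨hzU, (hφg hzV).symm ▸ hzg, hzV⟩).1
  have hlocmin :=
    isLocalMin_of_subgraph hmin hsub (hVopen.mem_nhds hyV) hg.continuous.continuousAt
  have hc : 0 < projV m x - g ystar := by
    refine (sub_nonneg_of_subgraph hmin hsub hyV).lt_of_ne fun hc => hx ?_
    have hxy := hg.eq_of_isLocalMin_of_eq hlocmin (sub_eq_zero.1 hc.symm)
    have hx_coords : x = embGraph m (projH m x) (projV m x) := rfl
    rwa [hx_coords, ← hxy, sub_eq_zero.1 hc.symm]
  have hw := hg.smul_sub_mem_convexHull_reachableGradients (hVopen.mem_nhds hyV) hlocmin hc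
  rw [← reachableGradients_congr hVopen hφg] at hw
  have hxp : x - embGraph m ystar (g ystar) =
      embGraph m (projH m x - ystar) (projV m x - g ystar) := rfl
  rw [hxp]
  exact exists_graphNormal_combination_of_mem_convexHull hc hw

/-- Characterization of minimizers for Lipschitz domains: let `D` be closed, `x ∉ D`
with unique metric projection `p = P_D(x)`, and suppose that near `p` (after a
rotation) `∂D` is the graph of a Lipschitz function `φ` with `D` locally the subgraph
`{(y, y_d) : y_d ≤ φ(y)}`, `p = (y*, φ(y*))`.  Then the first-order optimality
condition `0 ∈ ∂Φ(y*)` for `Φ(y) = ½|(y, φ(y)) − x|²` yields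
`x − p = Σ_{j} α_j lim_i n_D(y_i^{(j)}, φ(y_i^{(j)}))` with `α_j ≥ 0` and sequences
`y_i^{(j)} → y*` at which `φ` is differentiable and the unit normals
`n_D(y, φ(y)) = (−∇φ(y), 1)/√(|∇φ(y)|² + 1)` converge. -/
theorem projection_direction_is_combination_of_limiting_normals (m : ℕ)
    (D : Set (WithLp 2 (EuclideanSpace ℝ (Fin m) × ℝ))) (hDclosed : IsClosed D)
    (x p : WithLp 2 (EuclideanSpace ℝ (Fin m) × ℝ)) (hx : x ∉ D) (hp : p ∈ D)
    (hmin : ∀ q ∈ D, dist x p ≤ dist x q)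
    (huniq : ∀ q ∈ D, dist x q = dist x p → q = p)
    (V : Set (EuclideanSpace ℝ (Fin m))) (hVopen : IsOpen V)
    (ystar : EuclideanSpace ℝ (Fin m)) (hyV : ystar ∈ V)
    (φ : EuclideanSpace ℝ (Fin m) → ℝ) (L : NNReal) (hφ : LipschitzOnWith L φ V)
    (hpeq : p = embGraph m ystar (φ ystar))
    (U : Set (WithLp 2 (EuclideanSpace ℝ (Fin m) × ℝ))) (hU : U ∈ nhds p)
    (hgraph : D ∩ U = {z ∈ U | projV m z ≤ φ (projH m z) ∧ projH m z ∈ V}) :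
    ∃ k : ℕ, 1 ≤ k ∧
      ∃ (α : Fin k → ℝ) (ν : Fin k → WithLp 2 (EuclideanSpace ℝ (Fin m) × ℝ))
        (y : Fin k → ℕ → EuclideanSpace ℝ (Fin m)),
        (∀ j, 0 ≤ α j) ∧
        (∀ j, Tendsto (y j) atTop (nhds ystar)) ∧
        (∀ j i, y j i ∈ V ∧ DifferentiableAt ℝ φ (y j i)) ∧
        (∀ j, Tendsto
          (fun i => (Real.sqrt (‖gradient φ (y j i)‖ ^ 2 + 1))⁻¹ •
            embGraph m (-(gradient φ (y j i))) 1) atTop (nhds (ν j))) ∧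
        x - p = ∑ j, α j • ν j :=
  projection_direction_is_combination_of_limiting_normals_general m D x p hx hp hmin V hVopen ystar
    hyV φ L hφ hpeq U hU hgraph
end
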